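/- Let ω ∈ Ω, x ∈ ℝ, y > 0 and k ∈ {1,…,l}. Let f^{(k)}(x+iy) denote the k-th column of the Jost solution F(x+iy, ω), and suppose there exists a solution f^{(k)}(x) of the eigenvalue equation at x with the same initial value f^{(k)}_0(x) = f^{(k)}_0(x+iy) = e_k which is square-summable at +∞. Then ∑_{m=1}^{∞} ‖f^{(k)}_m(x+iy)‖²_{ℂ^l} ≤ ∑_{m=1}^{∞} ‖f^{(k)}_m(x)‖²_{ℂ^l}. -/

import Mathlib

open MeasureTheory Matrix Filter Topology Finset

noncomputable section

/-- Complexification of a real matrix. -/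
def cx {l : ℕ} (A : Matrix (Fin l) (Fin l) ℝ) : Matrix (Fin l) (Fin l) ℂ :=
  A.map (fun a => (a : ℂ))

/-- The imaginary part of a complex square matrix: `Im[A] = (A − Aᴴ)/(2i)`. -/
def matIm {m : Type*} (A : Matrix m m ℂ) : Matrix m m ℂ :=
  (2 * Complex.I)⁻¹ • (A - Aᴴ)

/-- `F` is a matrix solution of the eigenvalue equation
`D_{n-1} F_{n-1} + D_n F_{n+1} + V_n F_n = z F_n` (on `ℤ_+`, for `n ≥ 1`). -/
def IsMatSol {l : ℕ} (Ds Vs : ℕ → Matrix (Fin l) (Fin l) ℂ) (z : ℂ)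
    (F : ℕ → Matrix (Fin l) (Fin l) ℂ) : Prop :=
  ∀ n : ℕ, 1 ≤ n → Ds (n - 1) * F (n - 1) + Ds n * F (n + 1) + Vs n * F n = z • F n

/-- `F` is the Jost solution at `+∞`: a matrix solution with `F 0 = I`,
square-summable on `ℤ_+`. -/
def IsJost {l : ℕ} (Ds Vs : ℕ → Matrix (Fin l) (Fin l) ℂ) (z : ℂ)
    (F : ℕ → Matrix (Fin l) (Fin l) ℂ) : Prop :=
  IsMatSol Ds Vs z F ∧ F 0 = 1 ∧
    Summable (fun n : ℕ => ∑ i, ∑ j, ‖F n i j‖ ^ 2)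

/-- `u` is a (vector) solution of the eigenvalue equation on `ℤ_+`. -/
def IsVecSol {l : ℕ} (Ds Vs : ℕ → Matrix (Fin l) (Fin l) ℂ) (z : ℂ)
    (u : ℕ → Fin l → ℂ) : Prop :=
  ∀ n : ℕ, 1 ≤ n → Ds (n - 1) *ᵥ u (n - 1) + Ds n *ᵥ u (n + 1) + Vs n *ᵥ u n = z • u n

/-!
For solutions `u, v` of the eigenvalue equation at energies `w, z`, the discrete Green identity
says that the Wronskian `W_n(u, v) = ⟨u_n, D_n v_{n+1}⟩ - ⟨u_{n+1}, D_n v_n⟩` increases by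
`(z - w̄) ⟨u_{n+1}, v_{n+1}⟩` from `n` to `n + 1`. For square-summable solutions and bounded `D`
it vanishes at infinity, so `W_0(u, v) = -(z - w̄) ∑_{n ≥ 1} ⟨u_n, v_n⟩`. Let `f` be the column
at `x + iy` and `g` the solution at `x`, both starting at `e_k`. The imaginary parts of this
identity for the pairs `(f, f)`, `(g, g)`, `(g, f)` give `∑ ‖f_n‖² = Re ∑ ⟨g_n, f_n⟩`, which is at
most `(∑ ‖f_n‖² + ∑ ‖g_n‖²) / 2`.
-/

open ComplexConjugate

theorem Matrix.IsHermitian.star_mulVec_dotProduct {m α : Type*} [Fintype m] [CommSemiring α]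
    [StarRing α] {A : Matrix m m α} (hA : A.IsHermitian) (a b : m → α) :
    star (A *ᵥ a) ⬝ᵥ b = star a ⬝ᵥ (A *ᵥ b) := by
  rw [star_mulVec, hA.eq, ← dotProduct_mulVec]

theorem Matrix.IsHermitian.conj_star_dotProduct_mulVec {m : Type*} [Fintype m]
    {A : Matrix m m ℂ} (hA : A.IsHermitian) (a b : m → ℂ) :
    conj (star a ⬝ᵥ (A *ᵥ b)) = star b ⬝ᵥ (A *ᵥ a) := by
  rw [← RCLike.star_def, ← star_dotProduct_star, star_star, hA.star_mulVec_dotProduct]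

section SquareSummable

variable {m : Type*} [Fintype m]

theorem tendsto_zero_of_summable_sum_norm_sq {u : ℕ → m → ℂ}
    (hu : Summable fun n => ∑ i, ‖u n i‖ ^ 2) : Tendsto u atTop (𝓝 0) := by
  refine tendsto_pi_nhds.2 fun i => tendsto_zero_iff_norm_tendsto_zero.2 ?_
  have hsq : Tendsto (fun n => ‖u n i‖ ^ 2) atTop (𝓝 0) :=
    squeeze_zero (fun n => by positivity)
      (fun n => Finset.single_le_sum (f := fun j => ‖u n j‖ ^ 2) (fun j _ => by positivity)
        (Finset.mem_univ i))
      hu.tendsto_atTop_zero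
  simpa using hsq.sqrt

theorem tendsto_star_dotProduct_mulVec_zero {Ds : ℕ → Matrix m m ℂ} {C : ℝ}
    (hC : ∀ n i j, ‖Ds n i j‖ ≤ C) {a b : ℕ → m → ℂ}
    (ha : Tendsto a atTop (𝓝 0)) (hb : Tendsto b atTop (𝓝 0)) :
    Tendsto (fun n => star (a n) ⬝ᵥ (Ds n *ᵥ b n)) atTop (𝓝 0) := by
  have hexpand : ∀ n, star (a n) ⬝ᵥ (Ds n *ᵥ b n)
      = ∑ i, ∑ j, star (a n i) * b n j * Ds n i j := fun n => by
    simp only [dotProduct, mulVec, Finset.mul_sum, Pi.star_apply]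
    exact Finset.sum_congr rfl fun i _ => Finset.sum_congr rfl fun j _ => by ring
  simp_rw [hexpand]
  rw [show (0 : ℂ) = ∑ i : m, ∑ j : m, 0 by simp]
  refine tendsto_finsetSum _ fun i _ => tendsto_finsetSum _ fun j _ => ?_
  have hai := (tendsto_pi_nhds.1 ha i).star
  have hbj := tendsto_pi_nhds.1 hb j
  simp only [Pi.zero_apply, star_zero] at hai hbj
  have habij := hai.mul hbj
  rw [zero_mul] at habij
  exact habij.zero_mul_isBoundedUnder_le (isBoundedUnder_of ⟨C, fun n => hC n i j⟩)

theorem norm_star_dotProduct_le (u v : m → ℂ) :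
    ‖star u ⬝ᵥ v‖ ≤ (∑ i, ‖u i‖ ^ 2 + ∑ i, ‖v i‖ ^ 2) / 2 :=
  calc ‖star u ⬝ᵥ v‖ ≤ ∑ i, ‖u i‖ * ‖v i‖ := by
        refine (norm_sum_le _ _).trans_eq (Finset.sum_congr rfl fun i _ => ?_)
        rw [Pi.star_apply, norm_mul, norm_star]
    _ ≤ ∑ i, (‖u i‖ ^ 2 + ‖v i‖ ^ 2) / 2 :=
        Finset.sum_le_sum fun i _ => by nlinarith [sq_nonneg (‖u i‖ - ‖v i‖)]
    _ = (∑ i, ‖u i‖ ^ 2 + ∑ i, ‖v i‖ ^ 2) / 2 := by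
        rw [← Finset.sum_div, Finset.sum_add_distrib]

theorem summable_star_dotProduct {ι : Type*} {u v : ι → m → ℂ}
    (hu : Summable fun n => ∑ i, ‖u n i‖ ^ 2) (hv : Summable fun n => ∑ i, ‖v n i‖ ^ 2) :
    Summable fun n => star (u n) ⬝ᵥ v n :=
  .of_norm_bounded ((hu.add hv).div_const 2) fun n => norm_star_dotProduct_le (u n) (v n)

theorem re_tsum_star_dotProduct_le {ι : Type*} {u v : ι → m → ℂ}
    (hu : Summable fun n => ∑ i, ‖u n i‖ ^ 2) (hv : Summable fun n => ∑ i, ‖v n i‖ ^ 2) :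
    (∑' n, star (u n) ⬝ᵥ v n).re
      ≤ (∑' n, ∑ i, ‖u n i‖ ^ 2 + ∑' n, ∑ i, ‖v n i‖ ^ 2) / 2 := by
  rw [Complex.re_tsum (summable_star_dotProduct hu hv), ← hu.tsum_add hv, ← tsum_div_const]
  exact (summable_star_dotProduct hu hv).mapL Complex.reCLM |>.tsum_le_tsum
    (fun n => (Complex.re_le_norm _).trans (norm_star_dotProduct_le (u n) (v n)))
    ((hu.add hv).div_const 2)

theorem star_dotProduct_self_eq_sum_norm_sq (v : m → ℂ) :
    star v ⬝ᵥ v = ((∑ i, ‖v i‖ ^ 2 : ℝ) : ℂ) := by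
  push_cast
  refine Finset.sum_congr rfl fun i _ => ?_
  rw [Pi.star_apply, Complex.star_def, mul_comm, Complex.mul_conj, Complex.normSq_eq_norm_sq]
  push_cast
  rfl

end SquareSummable

section Wronskian

variable {l : ℕ} {Ds Vs : ℕ → Matrix (Fin l) (Fin l) ℂ}

def wronskian (Ds : ℕ → Matrix (Fin l) (Fin l) ℂ) (u v : ℕ → Fin l → ℂ) (n : ℕ) : ℂ :=
  star (u n) ⬝ᵥ (Ds n *ᵥ v (n + 1)) - star (u (n + 1)) ⬝ᵥ (Ds n *ᵥ v n)

theorem wronskian_succ_sub (hD : ∀ n, (Ds n).IsHermitian) (hV : ∀ n, (Vs n).IsHermitian)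
    {w z : ℂ} {u v : ℕ → Fin l → ℂ} (hu : IsVecSol Ds Vs w u) (hv : IsVecSol Ds Vs z v)
    (n : ℕ) :
    wronskian Ds u v (n + 1) - wronskian Ds u v n
      = (z - conj w) * (star (u (n + 1)) ⬝ᵥ v (n + 1)) := by
  have hu1 := congrArg (fun t => star t ⬝ᵥ v (n + 1)) (hu (n + 1) n.succ_pos)
  have hv1 := congrArg (fun t => star (u (n + 1)) ⬝ᵥ t) (hv (n + 1) n.succ_pos)
  simp only [Nat.add_sub_cancel, star_add, add_dotProduct, star_smul, smul_dotProduct,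
    smul_eq_mul, dotProduct_add, dotProduct_smul, (hD _).star_mulVec_dotProduct,
    (hV _).star_mulVec_dotProduct, Complex.star_def] at hu1 hv1
  unfold wronskian
  linear_combination hv1 - hu1

theorem wronskian_sub_wronskian_zero (hD : ∀ n, (Ds n).IsHermitian)
    (hV : ∀ n, (Vs n).IsHermitian) {w z : ℂ} {u v : ℕ → Fin l → ℂ}
    (hu : IsVecSol Ds Vs w u) (hv : IsVecSol Ds Vs z v) (N : ℕ) :
    wronskian Ds u v N - wronskian Ds u v 0
      = (z - conj w) * ∑ n ∈ Finset.range N, star (u (n + 1)) ⬝ᵥ v (n + 1) := by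
  rw [← Finset.sum_range_sub, Finset.mul_sum]
  exact Finset.sum_congr rfl fun n _ => wronskian_succ_sub hD hV hu hv n

theorem tendsto_wronskian_zero {C : ℝ} (hC : ∀ n i j, ‖Ds n i j‖ ≤ C) {u v : ℕ → Fin l → ℂ}
    (hu : Summable fun n => ∑ i, ‖u n i‖ ^ 2) (hv : Summable fun n => ∑ i, ‖v n i‖ ^ 2) :
    Tendsto (wronskian Ds u v) atTop (𝓝 0) := by
  have hu0 := tendsto_zero_of_summable_sum_norm_sq hu
  have hv0 := tendsto_zero_of_summable_sum_norm_sq hv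
  have hshift := tendsto_add_atTop_nat 1
  have h := (tendsto_star_dotProduct_mulVec_zero hC hu0 (hv0.comp hshift)).sub
    (tendsto_star_dotProduct_mulVec_zero hC (hu0.comp hshift) hv0)
  rw [sub_zero] at h
  exact h

theorem wronskian_zero_eq_neg_mul_tsum (hD : ∀ n, (Ds n).IsHermitian)
    (hV : ∀ n, (Vs n).IsHermitian) {C : ℝ} (hC : ∀ n i j, ‖Ds n i j‖ ≤ C)
    {w z : ℂ} {u v : ℕ → Fin l → ℂ} (hu : IsVecSol Ds Vs w u) (hv : IsVecSol Ds Vs z v)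
    (hus : Summable fun n => ∑ i, ‖u n i‖ ^ 2) (hvs : Summable fun n => ∑ i, ‖v n i‖ ^ 2) :
    wronskian Ds u v 0 = -((z - conj w) * ∑' n, star (u (n + 1)) ⬝ᵥ v (n + 1)) := by
  have hsum : Summable fun n => star (u (n + 1)) ⬝ᵥ v (n + 1) :=
    summable_star_dotProduct (hus.comp_injective (add_left_injective 1))
      (hvs.comp_injective (add_left_injective 1))
  have hlim : Tendsto (wronskian Ds u v) atTop
      (𝓝 (wronskian Ds u v 0 + (z - conj w) * ∑' n, star (u (n + 1)) ⬝ᵥ v (n + 1))) := by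
    refine (tendsto_const_nhds.add (hsum.hasSum.tendsto_sum_nat.const_mul _)).congr fun N => ?_
    rw [← wronskian_sub_wronskian_zero hD hV hu hv N, add_sub_cancel]
  linear_combination tendsto_nhds_unique hlim (tendsto_wronskian_zero hC hus hvs)

theorem wronskian_zero_of_eq (hD0 : (Ds 0).IsHermitian) {u v : ℕ → Fin l → ℂ}
    (h : u 0 = v 0) :
    wronskian Ds u v 0
      = star (v 0) ⬝ᵥ (Ds 0 *ᵥ v 1) - conj (star (u 0) ⬝ᵥ (Ds 0 *ᵥ u 1)) := by
  rw [wronskian, hD0.conj_star_dotProduct_mulVec, h]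

end Wronskian

section RealEnergy

variable {l : ℕ} {Ds Vs : ℕ → Matrix (Fin l) (Fin l) ℂ}

theorem tsum_sum_norm_sq_eq_re_tsum (hD : ∀ n, (Ds n).IsHermitian)
    (hV : ∀ n, (Vs n).IsHermitian) {C : ℝ} (hC : ∀ n i j, ‖Ds n i j‖ ≤ C)
    {x y : ℝ} (hy : y ≠ 0) {f g : ℕ → Fin l → ℂ}
    (hf : IsVecSol Ds Vs (x + y * Complex.I) f) (hg : IsVecSol Ds Vs x g) (hfg : f 0 = g 0)
    (hfs : Summable fun n => ∑ i, ‖f n i‖ ^ 2) (hgs : Summable fun n => ∑ i, ‖g n i‖ ^ 2) :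
    ∑' n, ∑ i, ‖f (n + 1) i‖ ^ 2 = (∑' n, star (g (n + 1)) ⬝ᵥ f (n + 1)).re := by
  have hW {w z : ℂ} {u v : ℕ → Fin l → ℂ} (hu : IsVecSol Ds Vs w u) (hv : IsVecSol Ds Vs z v)
      (hus : Summable fun n => ∑ i, ‖u n i‖ ^ 2) (hvs : Summable fun n => ∑ i, ‖v n i‖ ^ 2)
      (huv : u 0 = v 0) :=
    (wronskian_zero_of_eq (hD 0) huv).symm.trans
      (wronskian_zero_eq_neg_mul_tsum hD hV hC hu hv hus hvs)
  have hff := hW hf hf hfs hfs rfl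
  have hgg := hW hg hg hgs hgs rfl
  have hgf := hW hg hf hgs hfs hfg.symm
  simp only [star_dotProduct_self_eq_sum_norm_sq, ← Complex.ofReal_tsum, hfg] at hff hgg hgf
  have hff_im := congrArg Complex.im hff
  have hgg_im := congrArg Complex.im hgg
  have hgf_im := congrArg Complex.im hgf
  simp only [Complex.sub_im, Complex.conj_im, sub_neg_eq_add, map_add, Complex.conj_ofReal,
    map_mul, Complex.conj_I, mul_neg, add_sub_add_left_eq_sub, Complex.neg_im, Complex.mul_im,
    Complex.add_re, Complex.mul_re, Complex.ofReal_re, Complex.I_re, mul_zero, Complex.ofReal_im,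
    Complex.I_im, mul_one, sub_self, add_zero, Complex.add_im, zero_add, zero_mul, neg_zero,
    Complex.zero_im, add_self_eq_zero, add_sub_cancel_left] at hff_im hgg_im hgf_im
  exact mul_left_cancel₀ hy (by linear_combination hff_im / 2 - hgf_im + hgg_im)

theorem tsum_sum_norm_sq_le_of_real_energy (hD : ∀ n, (Ds n).IsHermitian)
    (hV : ∀ n, (Vs n).IsHermitian) {C : ℝ} (hC : ∀ n i j, ‖Ds n i j‖ ≤ C)
    {x y : ℝ} (hy : y ≠ 0) {f g : ℕ → Fin l → ℂ}
    (hf : IsVecSol Ds Vs (x + y * Complex.I) f) (hg : IsVecSol Ds Vs x g) (hfg : f 0 = g 0)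
    (hfs : Summable fun n => ∑ i, ‖f n i‖ ^ 2) (hgs : Summable fun n => ∑ i, ‖g n i‖ ^ 2) :
    ∑' n, ∑ i, ‖f (n + 1) i‖ ^ 2 ≤ ∑' n, ∑ i, ‖g (n + 1) i‖ ^ 2 := by
  have hle := re_tsum_star_dotProduct_le (hgs.comp_injective (add_left_injective 1))
    (hfs.comp_injective (add_left_injective 1))
  rw [← tsum_sum_norm_sq_eq_re_tsum hD hV hC hy hf hg hfg hfs hgs] at hle
  linarith

end RealEnergy

theorem Matrix.IsSymm.isHermitian_cx {l : ℕ} {A : Matrix (Fin l) (Fin l) ℝ} (hA : A.IsSymm) :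
    (cx A).IsHermitian :=
  (isHermitian_iff_isSymm.2 hA).map _ fun a => by simp

theorem IsMatSol.isVecSol_col {l : ℕ} {Ds Vs : ℕ → Matrix (Fin l) (Fin l) ℂ} {z : ℂ}
    {F : ℕ → Matrix (Fin l) (Fin l) ℂ} (hF : IsMatSol Ds Vs z F) (k : Fin l) :
    IsVecSol Ds Vs z fun n i => F n i k := by
  intro n hn
  funext i
  simpa [Matrix.mul_apply, Matrix.mulVec, dotProduct] using congrFun (congrFun (hF n hn) i) k

theorem IsJost.summable_col {l : ℕ} {Ds Vs : ℕ → Matrix (Fin l) (Fin l) ℂ} {z : ℂ}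
    {F : ℕ → Matrix (Fin l) (Fin l) ℂ} (hF : IsJost Ds Vs z F) (k : Fin l) :
    Summable fun n => ∑ i, ‖F n i k‖ ^ 2 :=
  hF.2.2.of_nonneg_of_le (fun n => by positivity) fun n => Finset.sum_le_sum fun i _ =>
    Finset.single_le_sum (f := fun j => ‖F n i j‖ ^ 2) (fun j _ => by positivity)
      (Finset.mem_univ k)

theorem jost_column_norm_le_general
    {Ω : Type*}
    (T : Equiv.Perm Ω)
    {l : ℕ} (D V : Ω → Matrix (Fin l) (Fin l) ℝ)
    (hDsymm : ∀ ω, (D ω).IsSymm)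
    (hDbdd : ∃ C : ℝ, ∀ ω i j, |D ω i j| ≤ C)
    (hVsymm : ∀ ω, (V ω).IsSymm)
    (ω : Ω) (x y : ℝ) (hy : 0 < y) (k : Fin l)
    (F : ℕ → Matrix (Fin l) (Fin l) ℂ)
    (hF : IsJost (fun n => cx (D ((T ^ n) ω))) (fun n => cx (V ((T ^ n) ω)))
      ((x : ℂ) + (y : ℂ) * Complex.I) F)
    (g : ℕ → Fin l → ℂ)
    (hg : IsVecSol (fun n => cx (D ((T ^ n) ω))) (fun n => cx (V ((T ^ n) ω)))
      ((x : ℂ)) g)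
    (hg0 : g 0 = fun i => if i = k then 1 else 0)
    (hgsum : Summable (fun n : ℕ => ∑ i, ‖g n i‖ ^ 2)) :
    ∑' m : ℕ, ∑ i, ‖F (m + 1) i k‖ ^ 2
      ≤ ∑' m : ℕ, ∑ i, ‖g (m + 1) i‖ ^ 2 := by
  obtain ⟨C, hC⟩ := hDbdd
  have hcol0 : (fun i => F 0 i k) = g 0 := by
    rw [hF.2.1, hg0]
    exact funext fun i => Matrix.one_apply
  exact tsum_sum_norm_sq_le_of_real_energy (fun n => (hDsymm _).isHermitian_cx)
    (fun n => (hVsymm _).isHermitian_cx) (fun n i j => by simpa [cx] using hC _ i j)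
    hy.ne' (hF.1.isVecSol_col k) hg hcol0 (hF.summable_col k) hgsum

/-- If the `k`-th column of the Jost solution at `x` (i.e. a solution at the
real energy `x` with initial value `e_k`) is square-summable at `+∞`, then the
`k`-th column of the Jost solution at `x + iy` has a smaller `ℓ²`-norm. -/
theorem jost_column_norm_le
    {Ω : Type*} [MeasurableSpace Ω] (ν : Measure Ω) [IsProbabilityMeasure ν]
    (T : Equiv.Perm Ω) (hT : Ergodic (⇑T) ν)
    {l : ℕ} (D V : Ω → Matrix (Fin l) (Fin l) ℝ)
    (hDsymm : ∀ ω, (D ω).IsSymm) (hDinv : ∀ ω, IsUnit (D ω))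
    (hDbdd : ∃ C : ℝ, ∀ ω i j, |D ω i j| ≤ C)
    (hVsymm : ∀ ω, (V ω).IsSymm)
    (ω : Ω) (x y : ℝ) (hy : 0 < y) (k : Fin l)
    (F : ℕ → Matrix (Fin l) (Fin l) ℂ)
    (hF : IsJost (fun n => cx (D ((T ^ n) ω))) (fun n => cx (V ((T ^ n) ω)))
      ((x : ℂ) + (y : ℂ) * Complex.I) F)
    (g : ℕ → Fin l → ℂ)
    (hg : IsVecSol (fun n => cx (D ((T ^ n) ω))) (fun n => cx (V ((T ^ n) ω)))
      ((x : ℂ)) g)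
    (hg0 : g 0 = fun i => if i = k then 1 else 0)
    (hgsum : Summable (fun n : ℕ => ∑ i, ‖g n i‖ ^ 2)) :
    ∑' m : ℕ, ∑ i, ‖F (m + 1) i k‖ ^ 2
      ≤ ∑' m : ℕ, ∑ i, ‖g (m + 1) i‖ ^ 2 :=
  jost_column_norm_le_general T D V hDsymm hDbdd hVsymm ω x y hy k F hF g hg hg0 hgsum
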